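/- With a as above and parameters in the open discs, Y² = ((1−a₀)² + a₁² + a₂² + a₃²) / ((1−a₀)² + a₁² + a₂² + a₃² + a₄² + a₅²) and W² = ((1−a₀)² + a₁²) / ((1−a₀)² + a₁² + a₂² + a₃²). Consequently X² = (1−a₀)((1−a₀)² + a₁² + a₂² + a₃² + a₄² + a₅²) / (2((1−a₀)² + a₁²)). -/
import Mathlib


noncomputable section

/-- The 8×8 matrix `A(x₁,x₂,x₃)` from the paper, with `X = √(1−x₁²−x₂²−x₃²)`. -/
def matA (x₁ x₂ x₃ : ℝ) : Matrix (Fin 8) (Fin 8) ℝ :=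
  let X := Real.sqrt (1 - x₁^2 - x₂^2 - x₃^2)
  Matrix.of ![
    ![1,0,0,0,0,0,0,0],
    ![0,1,0,0,0,0,0,0],
    ![0,0,1,0,0,0,0,0],
    ![0,0,0,1,0,0,0,0],
    ![0,0,0,0, 1-2*X^2, -2*x₁*X, -2*x₂*X, -2*x₃*X],
    ![0,0,0,0, 2*x₁*X, 1-2*X^2, 2*x₃*X, -2*x₂*X],
    ![0,0,0,0, 2*x₂*X, -2*x₃*X, 1-2*X^2, 2*x₁*X],
    ![0,0,0,0, 2*x₃*X, 2*x₂*X, -2*x₁*X, 1-2*X^2]]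

/-- The 8×8 matrix `B(y₁,y₂)` from the paper, with `Y = √(1−y₁²−y₂²)`. -/
def matB (y₁ y₂ : ℝ) : Matrix (Fin 8) (Fin 8) ℝ :=
  let Y := Real.sqrt (1 - y₁^2 - y₂^2)
  Matrix.of ![
    ![1,0,0,0,0,0,0,0],
    ![0,1,0,0,0,0,0,0],
    ![0,0, y₁, -y₂, -Y, 0, 0,0],
    ![0,0, y₂, y₁, 0, -Y, 0,0],
    ![0,0, Y, 0, y₁, y₂, 0,0],
    ![0,0, 0, Y, -y₂, y₁, 0,0],
    ![0,0,0,0,0,0,1,0],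
    ![0,0,0,0,0,0,0,1]]

/-- The 8×8 matrix `D(w₁,w₂)` from the paper, with `W = √(1−w₁²−w₂²)`. -/
def matD (w₁ w₂ : ℝ) : Matrix (Fin 8) (Fin 8) ℝ :=
  let W := Real.sqrt (1 - w₁^2 - w₂^2)
  Matrix.of ![
    ![w₁, -w₂, -W, 0, 0,0,0,0],
    ![w₂, w₁, 0, -W, 0,0,0,0],
    ![W, 0, w₁, w₂, 0,0,0,0],
    ![0, W, -w₂, w₁, 0,0,0,0],
    ![0,0,0,0,1,0,0,0],
    ![0,0,0,0,0,1,0,0],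
    ![0,0,0,0,0,0,1,0],
    ![0,0,0,0,0,0,0,1]]

/-- The companion matrix `D'(w₁,w₂)` from the paper. -/
def matD' (w₁ w₂ : ℝ) : Matrix (Fin 8) (Fin 8) ℝ :=
  let W := Real.sqrt (1 - w₁^2 - w₂^2)
  Matrix.of ![
    ![1,0,0,0,0,0,0,0],
    ![0,1,0,0,0,0,0,0],
    ![0,0,1,0,0,0,0,0],
    ![0,0,0,1,0,0,0,0],
    ![0,0,0,0, w₁, -w₂, W, 0],
    ![0,0,0,0, w₂, w₁, 0, -W],
    ![0,0,0,0, -W, 0, w₁, -w₂],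
    ![0,0,0,0, 0, W, w₂, w₁]]

/-- The basis vector `e₀ = (1,0,…,0)` (and the other standard basis vectors) of `ℝ⁸`. -/
def e8 (i : Fin 8) : Fin 8 → ℝ := fun j => if j = i then 1 else 0

/-- `φ₇(x,y,w) = D(w) B(y) A(x) B(y)⁻¹ D(w)⁻¹`. -/
def phi7 (x₁ x₂ x₃ y₁ y₂ w₁ w₂ : ℝ) : Matrix (Fin 8) (Fin 8) ℝ :=
  matD w₁ w₂ * matB y₁ y₂ * matA x₁ x₂ x₃ * (matB y₁ y₂)⁻¹ * (matD w₁ w₂)⁻¹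

/-- `a = D(w)B(y)A(x)B(y)⁻¹D(w)⁻¹ e₀ ∈ ℝ⁸`. -/
def avec (x₁ x₂ x₃ y₁ y₂ w₁ w₂ : ℝ) : Fin 8 → ℝ :=
  (phi7 x₁ x₂ x₃ y₁ y₂ w₁ w₂).mulVec (e8 0)


@[simp] private lemma cons_val_five' {α : Type*} {m : ℕ} (x : α) (u : Fin (m+5) → α) :
    Matrix.vecCons x u 5 =
      Matrix.vecHead (Matrix.vecTail (Matrix.vecTail (Matrix.vecTail (Matrix.vecTail u)))) :=
  rfl

@[simp] private lemma cons_val_six' {α : Type*} {m : ℕ} (x : α) (u : Fin (m+6) → α) :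
    Matrix.vecCons x u 6 =
      Matrix.vecHead (Matrix.vecTail (Matrix.vecTail (Matrix.vecTail (Matrix.vecTail
        (Matrix.vecTail u))))) :=
  rfl

@[simp] private lemma cons_val_seven' {α : Type*} {m : ℕ} (x : α) (u : Fin (m+7) → α) :
    Matrix.vecCons x u 7 =
      Matrix.vecHead (Matrix.vecTail (Matrix.vecTail (Matrix.vecTail (Matrix.vecTail
        (Matrix.vecTail (Matrix.vecTail u)))))) :=
  rfl

set_option maxHeartbeats 2000000 in
/-- the formulas recovering `Y²`, `W²` and `X²` from the components of `a`. -/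
theorem stmt_7 (x₁ x₂ x₃ y₁ y₂ w₁ w₂ : ℝ)
    (hx : x₁^2 + x₂^2 + x₃^2 < 1) (hy : y₁^2 + y₂^2 < 1) (hw : w₁^2 + w₂^2 < 1) :
    let X := Real.sqrt (1 - x₁^2 - x₂^2 - x₃^2)
    let Y := Real.sqrt (1 - y₁^2 - y₂^2)
    let W := Real.sqrt (1 - w₁^2 - w₂^2)
    let a := avec x₁ x₂ x₃ y₁ y₂ w₁ w₂
    Y^2 = ((1 - a 0)^2 + (a 1)^2 + (a 2)^2 + (a 3)^2) /
      ((1 - a 0)^2 + (a 1)^2 + (a 2)^2 + (a 3)^2 + (a 4)^2 + (a 5)^2) ∧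
    W^2 = ((1 - a 0)^2 + (a 1)^2) / ((1 - a 0)^2 + (a 1)^2 + (a 2)^2 + (a 3)^2) ∧
    X^2 = (1 - a 0) * ((1 - a 0)^2 + (a 1)^2 + (a 2)^2 + (a 3)^2 + (a 4)^2 + (a 5)^2) /
      (2 * ((1 - a 0)^2 + (a 1)^2)) := by


  set X := Real.sqrt (1 - x₁^2 - x₂^2 - x₃^2) with hXdef
  set Y := Real.sqrt (1 - y₁^2 - y₂^2) with hYdef
  set W := Real.sqrt (1 - w₁^2 - w₂^2) with hWdef
  have hX2 : X^2 = 1 - x₁^2 - x₂^2 - x₃^2 := Real.sq_sqrt (by linarith)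
  have hY2 : Y^2 = 1 - y₁^2 - y₂^2 := Real.sq_sqrt (by linarith)
  have hW2 : W^2 = 1 - w₁^2 - w₂^2 := Real.sq_sqrt (by linarith)
  have hXpos : 0 < X := Real.sqrt_pos.mpr (by linarith)
  have hYpos : 0 < Y := Real.sqrt_pos.mpr (by linarith)
  have hWpos : 0 < W := Real.sqrt_pos.mpr (by linarith)
  set Bt : Matrix (Fin 8) (Fin 8) ℝ := Matrix.of ![
    ![1,0,0,0,0,0,0,0],
    ![0,1,0,0,0,0,0,0],
    ![0,0, y₁, y₂, Y, 0, 0,0],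
    ![0,0, -y₂, y₁, 0, Y, 0,0],
    ![0,0, -Y, 0, y₁, -y₂, 0,0],
    ![0,0, 0, -Y, y₂, y₁, 0,0],
    ![0,0,0,0,0,0,1,0],
    ![0,0,0,0,0,0,0,1]] with hBt
  set Dt : Matrix (Fin 8) (Fin 8) ℝ := Matrix.of ![
    ![w₁, w₂, W, 0, 0,0,0,0],
    ![-w₂, w₁, 0, W, 0,0,0,0],
    ![-W, 0, w₁, -w₂, 0,0,0,0],
    ![0, -W, w₂, w₁, 0,0,0,0],
    ![0,0,0,0,1,0,0,0],
    ![0,0,0,0,0,1,0,0],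
    ![0,0,0,0,0,0,1,0],
    ![0,0,0,0,0,0,0,1]] with hDt
  have hBinv : (matB y₁ y₂)⁻¹ = Bt := by
    refine Matrix.inv_eq_right_inv ?_
    ext i j
    fin_cases i <;> fin_cases j <;>
      simp [matB, hBt, Matrix.mul_apply, Fin.sum_univ_succ, ← hYdef] <;>
      first | ring1 | linear_combination hY2
  have hDinv : (matD w₁ w₂)⁻¹ = Dt := by
    refine Matrix.inv_eq_right_inv ?_
    ext i j
    fin_cases i <;> fin_cases j <;>
      simp [matD, hDt, Matrix.mul_apply, Fin.sum_univ_succ, ← hWdef] <;>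
      first | ring1 | linear_combination hW2
  have key : avec x₁ x₂ x₃ y₁ y₂ w₁ w₂ =
      (matD w₁ w₂).mulVec ((matB y₁ y₂).mulVec ((matA x₁ x₂ x₃).mulVec
        (Bt.mulVec (Dt.mulVec (e8 0))))) := by
    rw [avec, phi7, hBinv, hDinv, Matrix.mulVec_mulVec, Matrix.mulVec_mulVec,
      Matrix.mulVec_mulVec, Matrix.mulVec_mulVec]
  have h1 : Dt.mulVec (e8 0) = ![w₁, -w₂, -W, 0, 0, 0, 0, 0] := by
    funext i
    fin_cases i <;>
      simp [hDt, e8, Matrix.mulVec, dotProduct, Fin.sum_univ_succ]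
  have h2 : Bt.mulVec ![w₁, -w₂, -W, 0, 0, 0, 0, 0] =
      ![w₁, -w₂, -(y₁*W), y₂*W, Y*W, 0, 0, 0] := by
    funext i
    fin_cases i <;>
      simp [hBt, Matrix.mulVec, dotProduct, Fin.sum_univ_succ] <;> ring
  have h3 : (matA x₁ x₂ x₃).mulVec ![w₁, -w₂, -(y₁*W), y₂*W, Y*W, 0, 0, 0] =
      ![w₁, -w₂, -(y₁*W), y₂*W, (1-2*X^2)*(Y*W), 2*x₁*X*(Y*W), 2*x₂*X*(Y*W), 2*x₃*X*(Y*W)] := by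
    funext i
    fin_cases i <;>
      simp [matA, Matrix.mulVec, dotProduct, Fin.sum_univ_succ, ← hXdef] <;> ring
  have h4 : (matB y₁ y₂).mulVec
      ![w₁, -w₂, -(y₁*W), y₂*W, (1-2*X^2)*(Y*W), 2*x₁*X*(Y*W), 2*x₂*X*(Y*W), 2*x₃*X*(Y*W)] =
      ![w₁, -w₂, (2*X^2*Y^2-1)*W, -(2*x₁*X*Y^2*W), 2*X*Y*W*(x₁*y₂ - X*y₁),
        2*X*Y*W*(X*y₂ + x₁*y₁), 2*x₂*X*(Y*W), 2*x₃*X*(Y*W)] := by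
    funext i
    fin_cases i <;>
      simp [matB, Matrix.mulVec, dotProduct, Fin.sum_univ_succ, ← hYdef] <;>
      first
        | ring1
        | linear_combination (-W) * hY2
        | linear_combination W * hY2
  have ha : avec x₁ x₂ x₃ y₁ y₂ w₁ w₂ =
      ![1 - 2*X^2*Y^2*W^2, 2*x₁*X*Y^2*W^2, 2*X*Y^2*W*(X*w₁ - x₁*w₂),
        -(2*X*Y^2*W*(X*w₂ + x₁*w₁)), 2*X*Y*W*(x₁*y₂ - X*y₁), 2*X*Y*W*(X*y₂ + x₁*y₁),
        2*x₂*X*(Y*W), 2*x₃*X*(Y*W)] := by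
    rw [key, h1, h2, h3, h4]
    funext i
    fin_cases i <;>
      simp [matD, Matrix.mulVec, dotProduct, Fin.sum_univ_succ, ← hWdef] <;>
      first | ring1 | linear_combination hW2 | linear_combination (-1 : ℝ) * hW2
  have ha0 : avec x₁ x₂ x₃ y₁ y₂ w₁ w₂ 0 = 1 - 2*X^2*Y^2*W^2 := by rw [ha]; rfl
  have ha1 : avec x₁ x₂ x₃ y₁ y₂ w₁ w₂ 1 = 2*x₁*X*Y^2*W^2 := by rw [ha]; rfl
  have ha2 : avec x₁ x₂ x₃ y₁ y₂ w₁ w₂ 2 = 2*X*Y^2*W*(X*w₁ - x₁*w₂) := by rw [ha]; rfl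
  have ha3 : avec x₁ x₂ x₃ y₁ y₂ w₁ w₂ 3 = -(2*X*Y^2*W*(X*w₂ + x₁*w₁)) := by rw [ha]; rfl
  have ha4 : avec x₁ x₂ x₃ y₁ y₂ w₁ w₂ 4 = 2*X*Y*W*(x₁*y₂ - X*y₁) := by rw [ha]; rfl
  have ha5 : avec x₁ x₂ x₃ y₁ y₂ w₁ w₂ 5 = 2*X*Y*W*(X*y₂ + x₁*y₁) := by rw [ha]; rfl
  have hP : 0 < X^2 + x₁^2 := by nlinarith [pow_pos hXpos 2, sq_nonneg x₁]
  have hpos2 : (0:ℝ) < 4*X^2*Y^4*W^4*(X^2+x₁^2) := by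
    have := pow_pos hXpos 2; have := pow_pos hYpos 4; have := pow_pos hWpos 4
    positivity
  have hpos3 : (0:ℝ) < 4*X^2*Y^4*W^2*(X^2+x₁^2) := by
    have := pow_pos hXpos 2; have := pow_pos hYpos 4; have := pow_pos hWpos 2
    positivity
  have hpos4 : (0:ℝ) < 4*X^2*Y^2*W^2*(X^2+x₁^2) := by
    have := pow_pos hXpos 2; have := pow_pos hYpos 2; have := pow_pos hWpos 2
    positivity
  have hS1' : (1 - (1 - 2*X^2*Y^2*W^2))^2 + (2*x₁*X*Y^2*W^2)^2
      = 4*X^2*Y^4*W^4*(X^2+x₁^2) := by ring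
  have hS2' : (1 - (1 - 2*X^2*Y^2*W^2))^2 + (2*x₁*X*Y^2*W^2)^2
      + (2*X*Y^2*W*(X*w₁ - x₁*w₂))^2 + (-(2*X*Y^2*W*(X*w₂ + x₁*w₁)))^2
      = 4*X^2*Y^4*W^2*(X^2+x₁^2) := by
    linear_combination (4*X^2*Y^4*W^2*(X^2+x₁^2)) * hW2
  have hS3' : (1 - (1 - 2*X^2*Y^2*W^2))^2 + (2*x₁*X*Y^2*W^2)^2
      + (2*X*Y^2*W*(X*w₁ - x₁*w₂))^2 + (-(2*X*Y^2*W*(X*w₂ + x₁*w₁)))^2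
      + (2*X*Y*W*(x₁*y₂ - X*y₁))^2 + (2*X*Y*W*(X*y₂ + x₁*y₁))^2
      = 4*X^2*Y^2*W^2*(X^2+x₁^2) := by
    linear_combination (4*X^2*Y^2*W^2*(X^2+x₁^2)*Y^2) * hW2
      + (4*X^2*Y^2*W^2*(X^2+x₁^2)) * hY2
  refine ⟨?_, ?_, ?_⟩
  · rw [ha0, ha1, ha2, ha3, ha4, ha5, hS3', hS2', eq_div_iff (ne_of_gt hpos4)]; ring
  · rw [ha0, ha1, ha2, ha3, hS2', hS1', eq_div_iff (ne_of_gt hpos3)]; ring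
  · rw [ha0, ha1, ha2, ha3, ha4, ha5, hS3', hS1',
      eq_div_iff (by positivity : (2*(4*X^2*Y^4*W^4*(X^2+x₁^2)) : ℝ) ≠ 0)]
    ring
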